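/- Let n ∈ ℙ and let {t_{k,n} : 1 ≤ k ≤ n} be a finite sequence of real numbers. Then the matrix transform kernel satisfies K_n^T = D_{2^{|n|}} · Σ_{k=1}^n t_{k,n} − w_{2^{|n|}−1} · t_{1,n} · (2^{|n|} − 1) · K_{2^{|n|}−1} + w_{2^{|n|}−1} · Σ_{k=1}^{2^{|n|}−2} Δt_{2^{|n|}−k−1,n} · k · K_k + r_{|n|} · Σ_{k=1}^{n−2^{|n|}} t_{2^{|n|}+k,n} · D_k (as functions on G). -/

import Mathlib

open MeasureTheory
open scoped ENNReal

noncomputable section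

/-- The dyadic group: countable product of `ZMod 2`. -/
abbrev G : Type := ℕ → ZMod 2

instance : TopologicalSpace (ZMod 2) := ⊥
instance : DiscreteTopology (ZMod 2) := ⟨rfl⟩
instance : IsTopologicalAddGroup (ZMod 2) :=
  { continuous_add := continuous_of_discreteTopology
    continuous_neg := continuous_of_discreteTopology }

instance : MeasurableSpace G := borel G
instance : BorelSpace G := ⟨rfl⟩

/-- The normalized Haar measure on the dyadic group. -/
def haarG : Measure G :=
  Measure.addHaarMeasure ⟨⟨Set.univ, isCompact_univ⟩, by simp⟩

/-- Rademacher functions. -/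
def rade (k : ℕ) (x : G) : ℝ := (-1 : ℝ) ^ (x k).val

/-- Walsh–Paley functions. -/
def walsh (n : ℕ) (x : G) : ℝ :=
  ∏ k ∈ Finset.range (n + 1), if n.testBit k then rade k x else 1

/-- Dirichlet kernels. -/
def Dker (n : ℕ) (x : G) : ℝ := ∑ k ∈ Finset.range n, walsh k x

/-- Fejér kernels. -/
def Fker (n : ℕ) (x : G) : ℝ := (1 / n : ℝ) * ∑ k ∈ Finset.Icc 1 n, Dker k x

/-- Walsh–Fourier coefficients. -/
def fourierCoef (f : G → ℝ) (j : ℕ) : ℝ := ∫ x, f x * walsh j x ∂haarG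

/-- Partial sums of the Walsh–Fourier series. -/
def partialSum (f : G → ℝ) (k : ℕ) (x : G) : ℝ :=
  ∑ j ∈ Finset.range k, fourierCoef f j * walsh j x

/-- Fejér means. -/
def fejerMean (n : ℕ) (f : G → ℝ) (x : G) : ℝ :=
  (1 / n : ℝ) * ∑ k ∈ Finset.Icc 1 n, partialSum f k x

/-- Matrix transform means. -/
def sigmaT (t : ℕ → ℕ → ℝ) (n : ℕ) (f : G → ℝ) (x : G) : ℝ :=
  ∑ k ∈ Finset.Icc 1 n, t k n * partialSum f k x

/-- Matrix transform kernels. -/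
def KT (t : ℕ → ℕ → ℝ) (n : ℕ) (x : G) : ℝ :=
  ∑ k ∈ Finset.Icc 1 n, t k n * Dker k x

/-- `Δ t_{k,n} = t_{k,n} - t_{k+1,n}` with convention `t_{n+1,n} = 0`. -/
def deltaT (t : ℕ → ℕ → ℝ) (k n : ℕ) : ℝ :=
  t k n - (if k + 1 ≤ n then t (k + 1) n else 0)

/-- `|x| = ∑ x_i 2^{-(i+1)}` for `x ∈ G`. -/
def normG (x : G) : ℝ := ∑' i, ((x i).val : ℝ) / 2 ^ (i + 1)

/-- The `L_p` modulus of continuity. -/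
def omegaP (p : ℝ≥0∞) (f : G → ℝ) (δ : ℝ) : ℝ≥0∞ :=
  ⨆ (t : G) (_ : normG t < δ), eLpNorm (fun x => f (x + t) - f x) p haarG

/-- Dyadic intervals `I_n` (around `0`). -/
def Iset (n : ℕ) : Set G := {y | ∀ i < n, y i = 0}

/-- `e_t ∈ G`: the `t`-th coordinate is `1`, the rest are `0`. -/
def eG (t : ℕ) : G := fun i => if i = t then 1 else 0

/-- The order `|n|` of a positive integer: `2^{|n|} ≤ n < 2^{|n|+1}`. -/
def ord (n : ℕ) : ℕ := Nat.log 2 n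

/-! Split `K_n^T` at `2 ^ |n|`. Because `w_a w_b = w_(a xor b)`, for `j ≤ 2 ^ N` one has
`D_(2^N + j) = D_(2^N) + r_N D_j` and `D_(2^N - j) = D_(2^N) - w_(2^N - 1) D_j`. The first identity
handles the tail block directly; the second reflects the head block into `Σ t_(2^N - j) D_j`, which
Abel summation with `j K_j = Σ_(i ≤ j) D_i` turns into the Fejér-kernel terms. -/

open Finset

lemma rade_mul_self (k : ℕ) (x : G) : rade k x * rade k x = 1 := by
  rw [rade, ← pow_add, Even.neg_one_pow ⟨_, rfl⟩]

lemma prod_range_testBit_of_lt_two_pow (n : ℕ) (x : G) {A B : ℕ} (hA : n < 2 ^ A)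
    (hAB : A ≤ B) :
    ∏ k ∈ range B, (if n.testBit k then rade k x else 1)
      = ∏ k ∈ range A, (if n.testBit k then rade k x else 1) := by
  refine (prod_subset (range_subset_range.2 hAB) fun k _ hk => ?_).symm
  have hk : A ≤ k := by simpa using hk
  simp [Nat.testBit_lt_two_pow (hA.trans_le (Nat.pow_le_pow_right two_pos hk))]

lemma walsh_eq_prod_range {n M : ℕ} (h : n < 2 ^ M) (x : G) :
    walsh n x = ∏ k ∈ range M, (if n.testBit k then rade k x else 1) := by
  have hn : n < 2 ^ (n + 1) := Nat.lt_two_pow_self.trans (Nat.pow_lt_pow_succ one_lt_two)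
  rw [walsh, ← prod_range_testBit_of_lt_two_pow n x hn (le_max_left (n + 1) M),
    ← prod_range_testBit_of_lt_two_pow n x h (le_max_right (n + 1) M)]

lemma walsh_mul_walsh (a b : ℕ) (x : G) : walsh a x * walsh b x = walsh (a ^^^ b) x := by
  have ha : a < 2 ^ (a + b) :=
    Nat.lt_two_pow_self.trans_le (Nat.pow_le_pow_right two_pos le_self_add)
  have hb : b < 2 ^ (a + b) :=
    Nat.lt_two_pow_self.trans_le (Nat.pow_le_pow_right two_pos le_add_self)
  rw [walsh_eq_prod_range ha, walsh_eq_prod_range hb,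
    walsh_eq_prod_range (Nat.xor_lt_two_pow ha hb), ← prod_mul_distrib]
  refine prod_congr rfl fun k _ => ?_
  rw [Nat.testBit_xor]
  cases a.testBit k <;> cases b.testBit k <;> simp [rade_mul_self]

lemma walsh_two_pow (N : ℕ) (x : G) : walsh (2 ^ N) x = rade N x := by
  rw [walsh_eq_prod_range (Nat.pow_lt_pow_succ one_lt_two) x]
  simp [Nat.testBit_two_pow]

lemma two_pow_add_eq_xor {N i : ℕ} (h : i < 2 ^ N) : 2 ^ N + i = 2 ^ N ^^^ i := by
  refine Nat.eq_of_testBit_eq fun j => ?_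
  rw [Nat.testBit_xor, Nat.testBit_two_pow]
  rcases lt_trichotomy j N with hj | rfl | hj
  · simp [Nat.testBit_two_pow_add_gt hj, hj.ne']
  · simp [Nat.testBit_two_pow_add_eq, Nat.testBit_lt_two_pow h]
  · have hN : 2 ^ N + i < 2 ^ j := by
      calc 2 ^ N + i < 2 ^ N + 2 ^ N := by omega
        _ = 2 ^ (N + 1) := by ring
        _ ≤ 2 ^ j := Nat.pow_le_pow_right two_pos hj
    have hi : i < 2 ^ j := h.trans_le (Nat.pow_le_pow_right two_pos hj.le)
    simp [Nat.testBit_lt_two_pow hN, Nat.testBit_lt_two_pow hi, hj.ne]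

lemma two_pow_sub_one_xor {N l : ℕ} (h : l < 2 ^ N) : (2 ^ N - 1) ^^^ l = 2 ^ N - 1 - l := by
  refine Nat.eq_of_testBit_eq fun j => ?_
  rw [Nat.sub_sub, add_comm, Nat.testBit_two_pow_sub_succ h, Nat.testBit_xor,
    Nat.testBit_two_pow_sub_one]
  by_cases hj : j < N
  · simp [hj]
  · simp [hj, Nat.testBit_lt_two_pow (h.trans_le (Nat.pow_le_pow_right two_pos (not_lt.1 hj)))]

lemma walsh_two_pow_add {N i : ℕ} (h : i < 2 ^ N) (x : G) :
    walsh (2 ^ N + i) x = rade N x * walsh i x := by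
  rw [two_pow_add_eq_xor h, ← walsh_mul_walsh, walsh_two_pow]

lemma walsh_two_pow_sub_one_sub {N l : ℕ} (h : l < 2 ^ N) (x : G) :
    walsh (2 ^ N - 1 - l) x = walsh (2 ^ N - 1) x * walsh l x := by
  rw [← two_pow_sub_one_xor h, walsh_mul_walsh]

lemma Dker_succ (k : ℕ) (x : G) : Dker (k + 1) x = Dker k x + walsh k x :=
  sum_range_succ _ _

lemma Dker_two_pow_add {N j : ℕ} (h : j ≤ 2 ^ N) (x : G) :
    Dker (2 ^ N + j) x = Dker (2 ^ N) x + rade N x * Dker j x := by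
  induction j with
  | zero => simp [Dker]
  | succ j ih =>
    rw [← add_assoc, Dker_succ, ih (by omega), Dker_succ, walsh_two_pow_add (by omega)]
    ring

lemma Dker_two_pow_sub {N j : ℕ} (h : j ≤ 2 ^ N) (x : G) :
    Dker (2 ^ N - j) x = Dker (2 ^ N) x - walsh (2 ^ N - 1) x * Dker j x := by
  induction j with
  | zero => simp [Dker]
  | succ j ih =>
    have hj : j < 2 ^ N := by omega
    calc Dker (2 ^ N - (j + 1)) x = Dker (2 ^ N - j) x - walsh (2 ^ N - 1 - j) x := by
          rw [show 2 ^ N - j = 2 ^ N - 1 - j + 1 by omega, Dker_succ, Nat.sub_sub, add_comm 1 j]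
          ring
      _ = Dker (2 ^ N) x - walsh (2 ^ N - 1) x * Dker (j + 1) x := by
          rw [ih hj.le, walsh_two_pow_sub_one_sub hj, Dker_succ]
          ring

lemma natCast_mul_Fker (j : ℕ) (x : G) :
    (j : ℝ) * Fker j x = ∑ i ∈ Icc 1 j, Dker i x := by
  rcases j.eq_zero_or_pos with rfl | hj
  · simp
  · rw [Fker, ← mul_assoc, mul_one_div_cancel (by positivity), one_mul]

lemma sum_Icc_one_add {M : Type*} [AddCommMonoid M] (f : ℕ → M) (m l : ℕ) :
    ∑ k ∈ Icc 1 (m + l), f k = ∑ k ∈ Icc 1 m, f k + ∑ k ∈ Icc 1 l, f (m + k) := by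
  induction l with
  | zero => simp
  | succ l ih =>
    rw [← add_assoc, sum_Icc_succ_top (by omega), ih, sum_Icc_succ_top (by omega), add_assoc]
    rfl

lemma sum_Icc_one_by_parts {R : Type*} [CommRing R] (a d : ℕ → R) (M : ℕ) :
    ∑ j ∈ Icc 1 M, a j * d j
      = a M * ∑ i ∈ Icc 1 M, d i
        + ∑ j ∈ Icc 1 (M - 1), (a j - a (j + 1)) * ∑ i ∈ Icc 1 j, d i := by
  induction M with
  | zero => simp
  | succ M ih =>
    rcases M with _ | M
    · simp
    · simp only [Nat.add_sub_cancel] at ih ⊢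
      rw [sum_Icc_succ_top (b := M + 1) (by omega), ih,
        sum_Icc_succ_top (b := M + 1) (by omega) d,
        sum_Icc_succ_top (b := M) (by omega) (fun j => (a j - a (j + 1)) * ∑ i ∈ Icc 1 j, d i)]
      ring

lemma sum_Icc_mul_Dker_sub (a : ℕ → ℝ) (m : ℕ) (x : G) :
    ∑ k ∈ Icc 1 m, a k * Dker (m - k) x = ∑ j ∈ Icc 1 (m - 1), a (m - j) * Dker j x := by
  rcases m with _ | m
  · simp
  rw [sum_Icc_succ_top (by omega), Nat.sub_self, Nat.add_sub_cancel,
    show Dker 0 x = 0 from sum_range_zero _, mul_zero, add_zero]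
  refine sum_nbij' (fun k => m + 1 - k) (fun j => m + 1 - j) ?_ ?_ ?_ ?_ ?_ <;>
    intro k hk <;> rw [mem_Icc] at hk
  · exact mem_Icc.2 (by omega)
  · exact mem_Icc.2 (by omega)
  · omega
  · omega
  · rw [Nat.sub_sub_self (by omega)]

lemma sum_Icc_mul_Dker_two_pow (a : ℕ → ℝ) (N : ℕ) (x : G) :
    ∑ k ∈ Icc 1 (2 ^ N), a k * Dker k x
      = Dker (2 ^ N) x * ∑ k ∈ Icc 1 (2 ^ N), a k
        - walsh (2 ^ N - 1) x * ∑ j ∈ Icc 1 (2 ^ N - 1), a (2 ^ N - j) * Dker j x := by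
  have hreflect : ∀ k ∈ Icc 1 (2 ^ N), a k * Dker k x
      = Dker (2 ^ N) x * a k - walsh (2 ^ N - 1) x * (a k * Dker (2 ^ N - k) x) := by
    intro k hk
    have hk : k ≤ 2 ^ N := (mem_Icc.1 hk).2
    have := Dker_two_pow_sub (Nat.sub_le (2 ^ N) k) x
    rw [Nat.sub_sub_self hk] at this
    rw [this]
    ring
  rw [sum_congr rfl hreflect, sum_sub_distrib, ← mul_sum, ← mul_sum, sum_Icc_mul_Dker_sub]

lemma sum_Icc_mul_Dker_two_pow_add (a : ℕ → ℝ) {N l : ℕ} (hl : l ≤ 2 ^ N) (x : G) :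
    ∑ k ∈ Icc 1 l, a k * Dker (2 ^ N + k) x
      = Dker (2 ^ N) x * ∑ k ∈ Icc 1 l, a k + rade N x * ∑ k ∈ Icc 1 l, a k * Dker k x := by
  rw [mul_sum, mul_sum, ← sum_add_distrib]
  refine sum_congr rfl fun k hk => ?_
  rw [Dker_two_pow_add ((mem_Icc.1 hk).2.trans hl)]
  ring

lemma sum_Icc_mul_Dker_eq_Fker (b : ℕ → ℝ) (M : ℕ) (x : G) :
    ∑ j ∈ Icc 1 M, b j * Dker j x
      = b M * (M * Fker M x) + ∑ j ∈ Icc 1 (M - 1), (b j - b (j + 1)) * (j * Fker j x) := by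
  simp only [natCast_mul_Fker]
  exact sum_Icc_one_by_parts b (fun j => Dker j x) M

theorem statement8 (n : ℕ) (hn : 1 ≤ n) (t : ℕ → ℕ → ℝ) (x : G) :
    KT t n x =
      Dker (2 ^ ord n) x * (∑ k ∈ Finset.Icc 1 n, t k n)
      - walsh (2 ^ ord n - 1) x * t 1 n * ((2 : ℝ) ^ ord n - 1) * Fker (2 ^ ord n - 1) x
      + walsh (2 ^ ord n - 1) x *
          (∑ k ∈ Finset.Icc 1 (2 ^ ord n - 2), deltaT t (2 ^ ord n - k - 1) n * k * Fker k x)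
      + rade (ord n) x *
          (∑ k ∈ Finset.Icc 1 (n - 2 ^ ord n), t (2 ^ ord n + k) n * Dker k x) := by
  set N := ord n
  have hlow : 2 ^ N ≤ n := Nat.pow_log_le_self 2 (by omega)
  have hhigh : n - 2 ^ N ≤ 2 ^ N := by
    have : n < 2 ^ (N + 1) := Nat.lt_pow_succ_log_self one_lt_two n
    rw [pow_succ] at this
    omega
  have hsplit (f : ℕ → ℝ) : ∑ k ∈ Icc 1 n, f k
      = ∑ k ∈ Icc 1 (2 ^ N), f k + ∑ k ∈ Icc 1 (n - 2 ^ N), f (2 ^ N + k) := by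
    conv_lhs => rw [← Nat.add_sub_cancel' hlow]
    exact sum_Icc_one_add f _ _
  have hdelta : ∀ k ∈ Icc 1 (2 ^ N - 2),
      deltaT t (2 ^ N - k - 1) n * k * Fker k x
        = -((t (2 ^ N - k) n - t (2 ^ N - (k + 1)) n) * (k * Fker k x)) := by
    intro k hk
    have hk : k ≤ 2 ^ N - 2 := (mem_Icc.1 hk).2
    rw [deltaT, if_pos (by omega), Nat.sub_add_cancel (by omega), Nat.sub_sub]
    ring
  have hcast : ((2 ^ N - 1 : ℕ) : ℝ) = 2 ^ N - 1 := by
    rw [Nat.cast_sub Nat.one_le_two_pow]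
    norm_num
  rw [KT, hsplit, hsplit, sum_Icc_mul_Dker_two_pow, sum_Icc_mul_Dker_two_pow_add _ hhigh,
    sum_Icc_mul_Dker_eq_Fker, Nat.sub_sub_self Nat.one_le_two_pow, sum_congr rfl hdelta,
    sum_neg_distrib, hcast, Nat.sub_sub]
  ring
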